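/- (Bounding client drift in the convex case.) Let F_1, …, F_M : ℝ^d → ℝ be convex, differentiable and L-smooth, let F = (1/M)Σ_{i=1}^M F_i, let w* be a minimizer of F, and assume (1/M) Σ_{i=1}^M ‖∇F_i(w*)‖² ≤ σ*². Fix τ ≥ 1 and 0 < η_l ≤ 1/(6τL). Given w^{(t)} ∈ ℝ^d, define local full-batch gradient descent iterates w_i^{(t,0)} = w^{(t)} and w_i^{(t,k+1)} = w_i^{(t,k)} − η_l ∇F_i(w_i^{(t,k)}) for k = 0,…,τ−1. Then (1/M) Σ_{i=1}^M Σ_{k=0}^{τ−1} ‖w^{(t)} − w_i^{(t,k)}‖² ≤ 12 η_l² τ²(τ−1) L (F(w^{(t)}) − F(w*)) + 6 η_l² τ²(τ−1) σ*². -/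

import Mathlib

/-!
Unrolling local gradient descent gives `w - w_k = η ∑_{j<k} ∇f(w_j)`, so by Cauchy–Schwarz the
drift `D = ∑_{k<τ} ‖w - w_k‖²` is at most `η²τ(τ-1) ∑_{k<τ} ‖∇f(w_k)‖²`. Smoothness bounds
`‖∇f(w_k)‖² ≤ 2L²‖w - w_k‖² + 2‖∇f(w)‖²`, and since `η ≤ 1/(6τL)` the resulting multiple of `D`
can be absorbed: `D ≤ 3η²τ²(τ-1)‖∇f(w)‖²` for each client. Finally
`‖∇F_i(w)‖² ≤ 2‖∇F_i(w) - ∇F_i(w*)‖² + 2‖∇F_i(w*)‖²`; the first term is controlled on average by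
co-coercivity of convex `L`-smooth functions, `‖∇f(x) - ∇f(y)‖² ≤ 2L(f x - f y - ⟪∇f y, x - y⟫)`,
whose linear terms cancel in the average because `∑_i ∇F_i(w*) = 0` at the minimiser.
-/

open Finset InnerProductSpace
open scoped RealInnerProductSpace

section Gradient

variable {E : Type*} [NormedAddCommGroup E] [InnerProductSpace ℝ E] [CompleteSpace E]
  {f : E → ℝ} {f' : E → E} {L : ℝ}

theorem HasGradientAt.hasDerivAt_comp_add_smul {g x v : E} {t : ℝ}
    (hf : HasGradientAt f g (x + t • v)) :
    HasDerivAt (fun s : ℝ => f (x + s • v)) ⟪g, v⟫ t := by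
  have hline : HasDerivAt (fun s : ℝ => x + s • v) v t := by
    simpa using ((hasDerivAt_id t).smul_const v).const_add x
  have h := hf.hasFDerivAt.comp_hasDerivAt t hline
  rwa [toDual_apply_apply] at h

theorem IsLocalMin.hasGradientAt_eq_zero {g x : E} (hmin : IsLocalMin f x)
    (hf : HasGradientAt f g x) : g = 0 := by
  simpa using hmin.hasFDerivAt_eq_zero hf.hasFDerivAt

theorem ConvexOn.add_inner_sub_le_of_hasGradientAt {g x : E} (hc : ConvexOn ℝ Set.univ f)
    (hf : HasGradientAt f g x) (y : E) : f x + ⟪g, y - x⟫ ≤ f y := by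
  have hline : ConvexOn ℝ Set.univ (fun t : ℝ => f (x + t • (y - x))) := by
    have heq : (fun t : ℝ => f (x + t • (y - x))) = f ∘ AffineMap.lineMap x y := by
      ext t
      simp [AffineMap.lineMap_apply_module', add_comm]
    rw [heq]
    exact hc.comp_affineMap _
  have hderiv : HasDerivAt (fun t : ℝ => f (x + t • (y - x))) ⟪g, y - x⟫ 0 :=
    HasGradientAt.hasDerivAt_comp_add_smul (by simpa using hf)
  have := hline.le_slope_of_hasDerivAt (Set.mem_univ 0) (Set.mem_univ 1) one_pos hderiv
  simp only [slope_def_field, zero_smul, one_smul, add_zero, add_sub_cancel, sub_zero,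
    div_one] at this
  linarith

theorem hasGradientAt_inner_const (c x : E) : HasGradientAt (fun z => ⟪c, z⟫) c x := by
  rw [hasGradientAt_iff_hasFDerivAt]
  exact (toDual ℝ E c).hasFDerivAt

theorem le_add_inner_sub_add_of_lipschitz_gradient (hf : ∀ x, HasGradientAt f (f' x) x)
    (hs : ∀ x y, ‖f' x - f' y‖ ≤ L * ‖x - y‖) (x y : E) :
    f y ≤ f x + ⟪f' x, y - x⟫ + L / 2 * ‖y - x‖ ^ 2 := by
  set v := y - x
  set h : ℝ → ℝ := fun t => f (x + t • v) - t * ⟪f' x, v⟫ - L / 2 * t ^ 2 * ‖v‖ ^ 2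
  have hderiv : ∀ t, HasDerivAt h (⟪f' (x + t • v) - f' x, v⟫ - L * t * ‖v‖ ^ 2) t := by
    intro t
    have := ((hf (x + t • v)).hasDerivAt_comp_add_smul.sub
      ((hasDerivAt_id t).mul_const ⟪f' x, v⟫)).sub
      (((hasDerivAt_pow 2 t).const_mul (L / 2)).mul_const (‖v‖ ^ 2))
    refine this.congr_deriv ?_
    rw [inner_sub_left]
    push_cast
    ring
  have hslope : ∀ t ∈ interior (Set.Icc (0 : ℝ) 1),
      ⟪f' (x + t • v) - f' x, v⟫ - L * t * ‖v‖ ^ 2 ≤ 0 := by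
    intro t ht
    rw [interior_Icc] at ht
    have hlip : ‖f' (x + t • v) - f' x‖ ≤ L * t * ‖v‖ := by
      simpa [norm_smul, abs_of_pos ht.1, mul_assoc] using hs (x + t • v) x
    have := real_inner_le_norm (f' (x + t • v) - f' x) v
    nlinarith [norm_nonneg v]
  have hanti := antitoneOn_of_hasDerivWithinAt_nonpos (convex_Icc 0 1)
    (HasDerivAt.continuousOn fun t _ => hderiv t) (fun t _ => (hderiv t).hasDerivWithinAt) hslope
  have := hanti (by simp) (by simp) zero_le_one
  simp only [h, v, zero_smul, one_smul, add_zero, add_sub_cancel] at this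
  linarith

theorem sq_norm_le_of_forall_le_of_lipschitz_gradient (hL : 0 < L)
    (hf : ∀ x, HasGradientAt f (f' x) x) (hs : ∀ x y, ‖f' x - f' y‖ ≤ L * ‖x - y‖) {y : E}
    (hmin : ∀ z, f y ≤ f z) (x : E) : ‖f' x‖ ^ 2 ≤ 2 * L * (f x - f y) := by
  have hstep := le_add_inner_sub_add_of_lipschitz_gradient hf hs x (x - L⁻¹ • f' x)
  rw [sub_sub_cancel_left, inner_neg_right, real_inner_smul_right, real_inner_self_eq_norm_sq,
    norm_neg, norm_smul, Real.norm_of_nonneg (inv_nonneg.2 hL.le)] at hstep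
  have hquad : L / 2 * (L⁻¹ * ‖f' x‖) ^ 2 = L⁻¹ * ‖f' x‖ ^ 2 / 2 := by
    field_simp
  have hgap : L⁻¹ * ‖f' x‖ ^ 2 ≤ 2 * (f x - f y) := by
    linarith [hmin (x - L⁻¹ • f' x)]
  calc ‖f' x‖ ^ 2 = L * (L⁻¹ * ‖f' x‖ ^ 2) := by field_simp
    _ ≤ L * (2 * (f x - f y)) := by gcongr
    _ = 2 * L * (f x - f y) := by ring

theorem ConvexOn.sq_norm_sub_le_of_lipschitz_gradient (hc : ConvexOn ℝ Set.univ f) (hL : 0 < L)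
    (hf : ∀ x, HasGradientAt f (f' x) x) (hs : ∀ x y, ‖f' x - f' y‖ ≤ L * ‖x - y‖) (x y : E) :
    ‖f' x - f' y‖ ^ 2 ≤ 2 * L * (f x - f y - ⟪f' y, x - y⟫) := by
  -- The tilted function `φ` is still convex and `L`-smooth, and its gradient vanishes at `y`.
  set φ : E → ℝ := fun z => f z - ⟪f' y, z⟫
  have hφ : ∀ z, HasGradientAt φ (f' z - f' y) z := fun z => by
    have := (hf z).hasFDerivAt.sub (hasGradientAt_inner_const (f' y) z).hasFDerivAt
    rwa [← map_sub] at this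
  have hφc : ConvexOn ℝ Set.univ φ := hc.sub ((innerₛₗ ℝ (f' y)).concaveOn convex_univ)
  have hmin : ∀ z, φ y ≤ φ z := fun z => by
    simpa using hφc.add_inner_sub_le_of_hasGradientAt (hφ y) z
  have hgap : φ x - φ y = f x - f y - ⟪f' y, x - y⟫ := by
    simp only [φ, inner_sub_right]
    ring
  rw [← hgap]
  exact sq_norm_le_of_forall_le_of_lipschitz_gradient hL hφ
    (fun a b => by simpa using hs a b) hmin x

theorem mul_sum_sq_norm_sub_le_of_forall_le {ι : Type*} [Fintype ι] {F : ι → E → ℝ}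
    {F' : ι → E → E} {Fbar : E → ℝ} {c : ℝ} (hc : 0 ≤ c) (hFbar : ∀ w, Fbar w = c * ∑ i, F i w)
    (hconv : ∀ i, ConvexOn ℝ Set.univ (F i)) (hL : 0 < L)
    (hF : ∀ i x, HasGradientAt (F i) (F' i x) x)
    (hs : ∀ i x y, ‖F' i x - F' i y‖ ≤ L * ‖x - y‖) {y : E} (hmin : ∀ w, Fbar y ≤ Fbar w)
    (x : E) : c * ∑ i, ‖F' i x - F' i y‖ ^ 2 ≤ 2 * L * (Fbar x - Fbar y) := by
  have hgrad : HasGradientAt Fbar (c • ∑ i, F' i y) y := by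
    rw [funext hFbar, hasGradientAt_iff_hasFDerivAt, map_smul, map_sum]
    exact (HasFDerivAt.fun_sum fun i _ => (hF i y).hasFDerivAt).const_mul c
  have hcrit : c • ∑ i, F' i y = 0 :=
    IsLocalMin.hasGradientAt_eq_zero (Filter.Eventually.of_forall hmin) hgrad
  calc c * ∑ i, ‖F' i x - F' i y‖ ^ 2
      ≤ c * ∑ i, 2 * L * (F i x - F i y - ⟪F' i y, x - y⟫) := by
        gcongr with i
        exact (hconv i).sq_norm_sub_le_of_lipschitz_gradient hL (hF i) (hs i) x y
    _ = 2 * L * (Fbar x - Fbar y - ⟪c • ∑ i, F' i y, x - y⟫) := by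
        rw [hFbar, hFbar, real_inner_smul_left, sum_inner, ← mul_sum, sum_sub_distrib,
          sum_sub_distrib]
        ring
    _ = 2 * L * (Fbar x - Fbar y) := by rw [hcrit, inner_zero_left, sub_zero]

end Gradient

section Drift

variable {E : Type*} [SeminormedAddCommGroup E]

theorem sq_norm_sum_le_card_mul_sum_sq_norm {ι : Type*} (s : Finset ι) (v : ι → E) :
    ‖∑ i ∈ s, v i‖ ^ 2 ≤ #s * ∑ i ∈ s, ‖v i‖ ^ 2 :=
  (pow_le_pow_left₀ (norm_nonneg _) (norm_sum_le s v) 2).trans sq_sum_le_card_mul_sum_sq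

theorem sq_norm_le_two_mul_sq_norm_sub_add_sq_norm (a b : E) :
    ‖a‖ ^ 2 ≤ 2 * (‖a - b‖ ^ 2 + ‖b‖ ^ 2) :=
  (pow_le_pow_left₀ (norm_nonneg _) (norm_le_norm_sub_add a b) 2).trans add_sq_le

variable [NormedSpace ℝ E]

theorem sum_range_sq_norm_sub_le_of_eq_sub_smul {x g : ℕ → E} {η : ℝ} {τ : ℕ}
    (hx : ∀ k < τ, x (k + 1) = x k - η • g k) :
    ∑ k ∈ range τ, ‖x 0 - x k‖ ^ 2 ≤ η ^ 2 * (τ * (τ - 1)) * ∑ k ∈ range τ, ‖g k‖ ^ 2 := by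
  have hterm : ∀ k ∈ range τ, ‖x 0 - x k‖ ^ 2 ≤ η ^ 2 * (τ - 1) * ∑ j ∈ range τ, ‖g j‖ ^ 2 := by
    intro k hk
    have hkτ : k < τ := mem_range.mp hk
    have hsum : x 0 - x k = η • ∑ j ∈ range k, g j := by
      rw [← sum_range_sub', smul_sum]
      refine sum_congr rfl fun j hj => ?_
      rw [hx j ((mem_range.mp hj).trans hkτ), sub_sub_cancel]
    have hk' : (k : ℝ) ≤ τ - 1 := by
      rw [le_sub_iff_add_le]
      exact_mod_cast hkτ
    calc ‖x 0 - x k‖ ^ 2 = η ^ 2 * ‖∑ j ∈ range k, g j‖ ^ 2 := by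
          rw [hsum, norm_smul, mul_pow, Real.norm_eq_abs, sq_abs]
      _ ≤ η ^ 2 * (k * ∑ j ∈ range k, ‖g j‖ ^ 2) := by
          gcongr
          simpa using sq_norm_sum_le_card_mul_sum_sq_norm (range k) g
      _ ≤ η ^ 2 * ((τ - 1) * ∑ j ∈ range τ, ‖g j‖ ^ 2) := by
          gcongr
          linarith [(Nat.cast_nonneg k : (0 : ℝ) ≤ k)]
      _ = η ^ 2 * (τ - 1) * ∑ j ∈ range τ, ‖g j‖ ^ 2 := by ring
  calc ∑ k ∈ range τ, ‖x 0 - x k‖ ^ 2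
      ≤ ∑ k ∈ range τ, η ^ 2 * (τ - 1) * ∑ j ∈ range τ, ‖g j‖ ^ 2 := sum_le_sum hterm
    _ = η ^ 2 * (τ * (τ - 1)) * ∑ k ∈ range τ, ‖g k‖ ^ 2 := by
      rw [sum_const, card_range, nsmul_eq_mul]
      ring

theorem sum_range_sq_norm_sub_le_of_lipschitz {f' : E → E} {L η : ℝ} {τ : ℕ}
    (hs : ∀ x y, ‖f' x - f' y‖ ≤ L * ‖x - y‖) (hη : 6 * (η * L * τ) ^ 2 ≤ 1) {x : ℕ → E}
    (hx : ∀ k < τ, x (k + 1) = x k - η • f' (x k)) :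
    ∑ k ∈ range τ, ‖x 0 - x k‖ ^ 2 ≤ 3 * η ^ 2 * τ ^ 2 * (τ - 1) * ‖f' (x 0)‖ ^ 2 := by
  set D := ∑ k ∈ range τ, ‖x 0 - x k‖ ^ 2
  set G := ∑ k ∈ range τ, ‖f' (x k)‖ ^ 2
  set q := η ^ 2 * (τ * (τ - 1) : ℝ)
  have hq : 0 ≤ q := by
    rcases τ with _ | n
    · simp [q]
    · push_cast [q]
      ring_nf
      positivity
  have hD : D ≤ q * G := sum_range_sq_norm_sub_le_of_eq_sub_smul hx
  have hG : G ≤ 2 * L ^ 2 * D + 2 * τ * ‖f' (x 0)‖ ^ 2 := by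
    have hterm : ∀ k, ‖f' (x k)‖ ^ 2 ≤ 2 * L ^ 2 * ‖x 0 - x k‖ ^ 2 + 2 * ‖f' (x 0)‖ ^ 2 := by
      intro k
      have hlip : ‖f' (x k) - f' (x 0)‖ ≤ L * ‖x 0 - x k‖ := by
        simpa [norm_sub_rev (x k)] using hs (x k) (x 0)
      calc ‖f' (x k)‖ ^ 2 ≤ 2 * (‖f' (x k) - f' (x 0)‖ ^ 2 + ‖f' (x 0)‖ ^ 2) :=
            sq_norm_le_two_mul_sq_norm_sub_add_sq_norm _ _
        _ ≤ 2 * ((L * ‖x 0 - x k‖) ^ 2 + ‖f' (x 0)‖ ^ 2) := by gcongr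
        _ = _ := by ring
    calc G ≤ ∑ k ∈ range τ, (2 * L ^ 2 * ‖x 0 - x k‖ ^ 2 + 2 * ‖f' (x 0)‖ ^ 2) :=
          sum_le_sum fun k _ => hterm k
      _ = _ := by
          rw [sum_add_distrib, ← mul_sum, sum_const, card_range, nsmul_eq_mul]
          ring
  have hsmall : 2 * L ^ 2 * q ≤ 1 / 3 := by
    have : q ≤ η ^ 2 * τ ^ 2 := by
      simp only [q]
      nlinarith [sq_nonneg η, (Nat.cast_nonneg τ : (0 : ℝ) ≤ τ)]
    nlinarith [sq_nonneg L]
  have hD0 : 0 ≤ D := by positivity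
  nlinarith [mul_le_mul_of_nonneg_left hG hq, mul_le_mul_of_nonneg_right hsmall hD0]

end Drift

theorem pos_and_one_le_and_sq_le_of_le_one_div {η L : ℝ} {τ : ℕ} (hη : 0 < η)
    (hηL : η ≤ 1 / (6 * τ * L)) : 0 < L ∧ 1 ≤ (τ : ℝ) ∧ 6 * (η * L * τ) ^ 2 ≤ 1 := by
  have hτL : 0 < 6 * τ * L := by
    by_contra! h
    linarith [one_div_nonpos.mpr h]
  have hL : 0 < L := pos_of_mul_pos_right hτL (by positivity)
  have hτ : (0 : ℝ) < τ := by linarith [pos_of_mul_pos_left hτL hL.le]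
  refine ⟨hL, Nat.one_le_cast.mpr (Nat.cast_pos.mp hτ), ?_⟩
  have := (le_div_iff₀ hτL).mp hηL
  nlinarith [mul_pos (mul_pos hη hL) hτ]

theorem bounding_client_drift_convex_general {d M : ℕ}
    (F : Fin M → EuclideanSpace ℝ (Fin d) → ℝ)
    (Fbar : EuclideanSpace ℝ (Fin d) → ℝ)
    (hFbar : ∀ w, Fbar w = (1 / (M : ℝ)) * ∑ i, F i w)
    (L ηl σstar : ℝ) (τ : ℕ)
    (hconv : ∀ i, ConvexOn ℝ Set.univ (F i)) (hdiff : ∀ i, Differentiable ℝ (F i))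
    (hsmooth : ∀ i, ∀ w w' : EuclideanSpace ℝ (Fin d),
      ‖gradient (F i) w - gradient (F i) w'‖ ≤ L * ‖w - w'‖)
    (wstar : EuclideanSpace ℝ (Fin d)) (hmin : ∀ w, Fbar wstar ≤ Fbar w)
    (hσ : (1 / (M : ℝ)) * ∑ i, ‖gradient (F i) wstar‖ ^ 2 ≤ σstar ^ 2)
    (hηl : 0 < ηl) (hηlL : ηl ≤ 1 / (6 * τ * L))
    (wt : EuclideanSpace ℝ (Fin d))
    (wloc : Fin M → ℕ → EuclideanSpace ℝ (Fin d))
    (hwloc0 : ∀ i, wloc i 0 = wt)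
    (hwlocrec : ∀ i, ∀ k < τ,
      wloc i (k + 1) = wloc i k - ηl • gradient (F i) (wloc i k)) :
    (1 / (M : ℝ)) * ∑ i, ∑ k ∈ Finset.range τ, ‖wt - wloc i k‖ ^ 2 ≤
      12 * ηl ^ 2 * τ ^ 2 * (τ - 1) * L * (Fbar wt - Fbar wstar)
        + 6 * ηl ^ 2 * τ ^ 2 * (τ - 1) * σstar ^ 2 := by
  obtain ⟨hL, hτ, hstep⟩ := pos_and_one_le_and_sq_le_of_le_one_div hηl hηlL
  have hc : 0 ≤ 3 * ηl ^ 2 * τ ^ 2 * (τ - 1) := by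
    have : (0 : ℝ) ≤ τ - 1 := by linarith
    positivity
  have hdrift : ∀ i, ∑ k ∈ range τ, ‖wt - wloc i k‖ ^ 2 ≤
      3 * ηl ^ 2 * τ ^ 2 * (τ - 1) * (2 * (‖gradient (F i) wt - gradient (F i) wstar‖ ^ 2
        + ‖gradient (F i) wstar‖ ^ 2)) := fun i => by
    have h := sum_range_sq_norm_sub_le_of_lipschitz (hsmooth i) hstep (hwlocrec i)
    rw [hwloc0 i] at h
    exact h.trans (mul_le_mul_of_nonneg_left (sq_norm_le_two_mul_sq_norm_sub_add_sq_norm _ _) hc)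
  have hcoco := mul_sum_sq_norm_sub_le_of_forall_le (by positivity) hFbar hconv hL
    (fun i x => (hdiff i x).hasGradientAt) hsmooth hmin wt
  calc (1 / (M : ℝ)) * ∑ i, ∑ k ∈ range τ, ‖wt - wloc i k‖ ^ 2
      ≤ (1 / (M : ℝ)) * ∑ i, 3 * ηl ^ 2 * τ ^ 2 * (τ - 1) *
          (2 * (‖gradient (F i) wt - gradient (F i) wstar‖ ^ 2 + ‖gradient (F i) wstar‖ ^ 2)) :=
        mul_le_mul_of_nonneg_left (sum_le_sum fun i _ => hdrift i) (by positivity)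
    _ = 6 * ηl ^ 2 * τ ^ 2 * (τ - 1) *
          ((1 / (M : ℝ)) * ∑ i, ‖gradient (F i) wt - gradient (F i) wstar‖ ^ 2
            + (1 / (M : ℝ)) * ∑ i, ‖gradient (F i) wstar‖ ^ 2) := by
        rw [← mul_sum, ← mul_sum, sum_add_distrib]
        ring
    _ ≤ 6 * ηl ^ 2 * τ ^ 2 * (τ - 1) * (2 * L * (Fbar wt - Fbar wstar) + σstar ^ 2) := by
        gcongr
    _ = _ := by ring

/-- Bounding client drift in the convex case (Lemma 6 in the appendix). -/
theorem bounding_client_drift_convex {d M : ℕ} (hM : 0 < M)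
    (F : Fin M → EuclideanSpace ℝ (Fin d) → ℝ)
    (Fbar : EuclideanSpace ℝ (Fin d) → ℝ)
    (hFbar : ∀ w, Fbar w = (1 / (M : ℝ)) * ∑ i, F i w)
    (L ηl σstar : ℝ) (τ : ℕ) (hτ : 1 ≤ τ)
    (hconv : ∀ i, ConvexOn ℝ Set.univ (F i)) (hdiff : ∀ i, Differentiable ℝ (F i))
    (hsmooth : ∀ i, ∀ w w' : EuclideanSpace ℝ (Fin d),
      ‖gradient (F i) w - gradient (F i) w'‖ ≤ L * ‖w - w'‖)
    (wstar : EuclideanSpace ℝ (Fin d)) (hmin : ∀ w, Fbar wstar ≤ Fbar w)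
    (hσ : (1 / (M : ℝ)) * ∑ i, ‖gradient (F i) wstar‖ ^ 2 ≤ σstar ^ 2)
    (hηl : 0 < ηl) (hηlL : ηl ≤ 1 / (6 * τ * L))
    (wt : EuclideanSpace ℝ (Fin d))
    (wloc : Fin M → ℕ → EuclideanSpace ℝ (Fin d))
    (hwloc0 : ∀ i, wloc i 0 = wt)
    (hwlocrec : ∀ i, ∀ k < τ,
      wloc i (k + 1) = wloc i k - ηl • gradient (F i) (wloc i k)) :
    (1 / (M : ℝ)) * ∑ i, ∑ k ∈ Finset.range τ, ‖wt - wloc i k‖ ^ 2 ≤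
      12 * ηl ^ 2 * τ ^ 2 * (τ - 1) * L * (Fbar wt - Fbar wstar)
        + 6 * ηl ^ 2 * τ ^ 2 * (τ - 1) * σstar ^ 2 :=
  bounding_client_drift_convex_general F Fbar hFbar L ηl σstar τ hconv hdiff hsmooth wstar hmin hσ
    hηl hηlL wt wloc hwloc0 hwlocrec
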